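/- Let w > 0 and let ν ≥ 1 be a natural number; set θ = -(ν - 1/2)·w. For each natural number n define p_n = (1 + n·w)/(2 + n·w + |θ|). Then p_n ≥ 1/2 if and only if n ≥ ν, and p_n < 1/2 if and only if n < ν. -/

import Mathlib

/-! Since `|θ| = (ν - 1/2)·w`, clearing the denominator turns `p_n ≥ 1/2` into
`(ν - 1/2)·w ≤ n·w`, i.e. `ν - 1/2 ≤ n`, which for integers means `ν ≤ n`. -/

theorem half_le_one_add_div_two_add_add_iff {x c : ℝ} (h : 0 < 2 + x + c) :
    1 / 2 ≤ (1 + x) / (2 + x + c) ↔ c ≤ x := by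
  rw [le_div_iff₀ h]
  constructor <;> intro <;> linarith

theorem Nat.cast_sub_half_le_cast_iff (m n : ℕ) : (m : ℝ) - 1 / 2 ≤ n ↔ m ≤ n := by
  constructor
  · intro h
    have : (m : ℝ) < n + 1 := by linarith
    exact_mod_cast Nat.lt_add_one_iff.mp (by exact_mod_cast this)
  · intro h
    have : (m : ℝ) ≤ n := by exact_mod_cast h
    linarith

/-- Theorem 2 of the paper: with w > 0, ν ≥ 1 and θ = -(ν - 1/2)·w,
the steady-state probability p_n = (1 + n·w)/(2 + n·w + |θ|) of observing the
active decision molecule satisfies p_n ≥ 1/2 iff n ≥ ν, and p_n < 1/2 iff n < ν. -/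
theorem taylor_crn_map_property (w : ℝ) (hw : 0 < w) (ν : ℕ) (hν : 1 ≤ ν)
    (θ : ℝ) (hθ : θ = -((ν : ℝ) - 1/2) * w) (n : ℕ)
    (p : ℝ) (hp : p = (1 + (n : ℝ) * w) / (2 + (n : ℝ) * w + |θ|)) :
    (p ≥ 1/2 ↔ ν ≤ n) ∧ (p < 1/2 ↔ n < ν) := by
  have hν_half : (0 : ℝ) < (ν : ℝ) - 1 / 2 := by
    have : (1 : ℝ) ≤ ν := by exact_mod_cast hν
    linarith
  have habs : |θ| = ((ν : ℝ) - 1 / 2) * w := by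
    rw [hθ, neg_mul, abs_neg, abs_of_pos (mul_pos hν_half hw)]
  have key : p ≥ 1 / 2 ↔ ν ≤ n := by
    rw [hp, ge_iff_le, half_le_one_add_div_two_add_add_iff (by positivity), habs,
      mul_le_mul_iff_of_pos_right hw, Nat.cast_sub_half_le_cast_iff]
  refine ⟨key, ?_⟩
  rw [← not_le, ← not_le, ← ge_iff_le, key]
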